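/- The theory of an antisymmetric relation S together with two partial orders ≤ and ≤', both finer than S (≤ ⊆ S and ≤' ⊆ S), does not have the amalgamation property: there exist finite such structures C ⊆ A, C ⊆ B with C = A ∩ B that cannot be amalgamated. -/
import Mathlib


/-- A structure with an antisymmetric relation `S` and two partial orders
`le` and `le'`, both finer than `S`. -/
structure TwoOrdersStr where
  carrier : Type
  S : carrier → carrier → Prop
  le : carrier → carrier → Prop
  le' : carrier → carrier → Prop
  antisymm_S : ∀ x y, S x y → S y x → x = y
  refl_le : ∀ x, le x x
  trans_le : ∀ x y z, le x y → le y z → le x z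
  antisymm_le : ∀ x y, le x y → le y x → x = y
  refl_le' : ∀ x, le' x x
  trans_le' : ∀ x y z, le' x y → le' y z → le' x z
  antisymm_le' : ∀ x y, le' x y → le' y x → x = y
  finer : ∀ x y, le x y → S x y
  finer' : ∀ x y, le' x y → S x y

/-- Embeddings of such structures. -/
def TOEmb (X Y : TwoOrdersStr) (h : X.carrier → Y.carrier) : Prop :=
  Function.Injective h ∧ (∀ x y, X.S x y ↔ Y.S (h x) (h y)) ∧
  (∀ x y, X.le x y ↔ Y.le (h x) (h y)) ∧
  (∀ x y, X.le' x y ↔ Y.le' (h x) (h y))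

/-- Base structure `C`: two incomparable points. -/
@[reducible] def Cstr : TwoOrdersStr where
  carrier := Fin 2
  S x y := x = y
  le x y := x = y
  le' x y := x = y
  antisymm_S := by decide
  refl_le := by decide
  trans_le := by decide
  antisymm_le := by decide
  refl_le' := by decide
  trans_le' := by decide
  antisymm_le' := by decide
  finer := by decide
  finer' := by decide

/-- `A = C ∪ {a}` with `c ≤ a`, `a ≤' d` (c = 0, d = 1, a = 2). -/
@[reducible] def Astr : TwoOrdersStr where
  carrier := Fin 3
  S x y := x = y ∨ (x = 0 ∧ y = 2) ∨ (x = 2 ∧ y = 1)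
  le x y := x = y ∨ (x = 0 ∧ y = 2)
  le' x y := x = y ∨ (x = 2 ∧ y = 1)
  antisymm_S := by decide
  refl_le := by decide
  trans_le := by decide
  antisymm_le := by decide
  refl_le' := by decide
  trans_le' := by decide
  antisymm_le' := by decide
  finer := by decide
  finer' := by decide

/-- `B = C ∪ {b}` with `b ≤ c`, `d ≤' b` (c = 0, d = 1, b = 2). -/
@[reducible] def Bstr : TwoOrdersStr where
  carrier := Fin 3
  S x y := x = y ∨ (x = 2 ∧ y = 0) ∨ (x = 1 ∧ y = 2)
  le x y := x = y ∨ (x = 2 ∧ y = 0)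
  le' x y := x = y ∨ (x = 1 ∧ y = 2)
  antisymm_S := by decide
  refl_le := by decide
  trans_le := by decide
  antisymm_le := by decide
  refl_le' := by decide
  trans_le' := by decide
  antisymm_le' := by decide
  finer := by decide
  finer' := by decide

theorem twoOrders_not_AP :
    ∃ (C A B : TwoOrdersStr) (i : C.carrier → A.carrier)
      (j : C.carrier → B.carrier),
      Finite C.carrier ∧ Finite A.carrier ∧ Finite B.carrier ∧
      TOEmb C A i ∧ TOEmb C B j ∧
      ∀ (D : TwoOrdersStr) (k : A.carrier → D.carrier)
        (l : B.carrier → D.carrier),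
        TOEmb A D k → TOEmb B D l → (∀ c, k (i c) = l (j c)) → False := by
  refine ⟨Cstr, Astr, Bstr, Fin.castLE (by norm_num), Fin.castLE (by norm_num),
    inferInstance, inferInstance, inferInstance, ?_, ?_, ?_⟩
  · exact ⟨fun x y h => by simpa using h, by decide, by decide, by decide⟩
  · exact ⟨fun x y h => by simpa using h, by decide, by decide, by decide⟩
  · rintro D k l ⟨kinj, -, kle, kle'⟩ ⟨linj, -, lle, lle'⟩ hcomm
    have h0 : k 0 = l 0 := hcomm 0
    have h1 : k 1 = l 1 := hcomm 1
    -- c ≤ a in A : D.le (k 0) (k 2)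
    have hca : D.le (k 0) (k 2) := (kle 0 2).mp (by decide)
    -- a ≤' d in A : D.le' (k 2) (k 1)
    have had : D.le' (k 2) (k 1) := (kle' 2 1).mp (by decide)
    -- b ≤ c in B : D.le (l 2) (l 0)
    have hbc : D.le (l 2) (l 0) := (lle 2 0).mp (by decide)
    -- d ≤' b in B : D.le' (l 1) (l 2)
    have hdb : D.le' (l 1) (l 2) := (lle' 1 2).mp (by decide)
    -- b ≤ a and a ≤' b in D
    have hba : D.le (l 2) (k 2) := D.trans_le _ _ _ hbc (h0 ▸ hca)
    have hab : D.le' (k 2) (l 2) := D.trans_le' _ _ _ had (h1 ▸ hdb)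
    have heq : l 2 = k 2 :=
      D.antisymm_S _ _ (D.finer _ _ hba) (D.finer' _ _ hab)
    -- then a ≤' d ≤' b = a forces a = d, contradicting injectivity
    have : k 1 = k 2 :=
      D.antisymm_le' _ _ (heq ▸ h1 ▸ hdb) had
    have := kinj this
    exact absurd this (by decide)
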